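/- For all integers c ≥ 1: (a) cnt_v(c, l, 2^l − 1) = cnt_ℓ(c,l) for every l ≥ 1; and (b) cnt_v(c, l, 2^(l−1)) = cnt_ℓ(c,l)/2 + c for every l ≥ 2, where the division by 2 is exact. -/
import Mathlib


/-- The number of concise witnesses (excluding the winning state) of length `l ≥ 1` over
`c` even priorities, with all improvements except the value restriction. -/
def cntL : ℕ → ℕ → ℕ
  | _, 0 => 0
  | c, 1 => c + 1
  | c, l + 2 => 2 * ∑ i ∈ Finset.Icc 1 c, cntL i (l + 1)
termination_by _ l => l

/-- The count with the value of the witness additionally bounded by `v` (for `0 ≤ v < 2^l`). -/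
def cntV : ℕ → ℕ → ℕ → ℕ
  | _, _, 0 => 1
  | _, 0, _ + 1 => 0
  | c, 1, _ + 1 => c + 1
  | c, l + 2, v + 1 =>
    if v + 1 < 2 ^ (l + 1) then cntV c (l + 1) (v + 1)
    else (∑ i ∈ Finset.Icc 1 c, cntV i (l + 1) (v + 1 - 2 ^ (l + 1))) +
         ∑ i ∈ Finset.Icc 1 c, cntV i (l + 1) (2 ^ (l + 1) - 1)
termination_by _ l _ => l

lemma cntV_step (c l v : ℕ) (hv : 1 ≤ v) :
    cntV c (l + 2) v =
    if v < 2 ^ (l + 1) then cntV c (l + 1) v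
    else (∑ i ∈ Finset.Icc 1 c, cntV i (l + 1) (v - 2 ^ (l + 1))) +
         ∑ i ∈ Finset.Icc 1 c, cntV i (l + 1) (2 ^ (l + 1) - 1) := by
  obtain ⟨w, rfl⟩ : ∃ w, v = w + 1 := ⟨v - 1, by omega⟩
  rw [cntV]

lemma lemA : ∀ l, 1 ≤ l → ∀ c, 1 ≤ c → cntV c l (2 ^ l - 1) = cntL c l := by
  intro l
  induction l with
  | zero => omega
  | succ n ih =>
    intro _ c hc
    match n with
    | 0 => simp [cntV, cntL]
    | m + 1 =>
      have hp : 2 ^ (m + 1) ≤ 2 ^ (m + 2) := Nat.pow_le_pow_right (by norm_num) (by omega)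
      have hp1 : 1 ≤ 2 ^ (m + 1) := Nat.one_le_two_pow
      have hp2 : 2 ^ (m + 2) = 2 * 2 ^ (m + 1) := by ring
      rw [cntV_step _ _ _ (by omega)]
      rw [if_neg (by omega)]
      have h2 : 2 ^ (m + 2) - 1 - 2 ^ (m + 1) = 2 ^ (m + 1) - 1 := by omega
      rw [h2, cntL, two_mul]
      have hs : ∑ i ∈ Finset.Icc 1 c, cntV i (m + 1) (2 ^ (m + 1) - 1)
          = ∑ i ∈ Finset.Icc 1 c, cntL i (m + 1) := by
        refine Finset.sum_congr rfl fun i hi => ?_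
        exact ih (by omega) i (Finset.mem_Icc.mp hi).1
      rw [hs]

theorem cntV_top_and_half (c : ℕ) (hc : 1 ≤ c) :
    (∀ l : ℕ, 1 ≤ l → cntV c l (2 ^ l - 1) = cntL c l) ∧
    (∀ l : ℕ, 2 ≤ l → 2 ∣ cntL c l ∧ cntV c l (2 ^ (l - 1)) = cntL c l / 2 + c) := by
  constructor
  · exact fun l hl => lemA l hl c hc
  · intro l hl
    obtain ⟨m, rfl⟩ : ∃ m, l = m + 2 := ⟨l - 2, by omega⟩
    have hL : cntL c (m + 2) = 2 * ∑ i ∈ Finset.Icc 1 c, cntL i (m + 1) := by rw [cntL]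
    refine ⟨⟨_, hL⟩, ?_⟩
    have hp1 : 1 ≤ 2 ^ (m + 1) := Nat.one_le_two_pow
    have : m + 2 - 1 = m + 1 := by omega
    rw [this, cntV_step _ _ _ (by omega), if_neg (by omega), Nat.sub_self]
    have h1 : ∑ i ∈ Finset.Icc 1 c, cntV i (m + 1) 0 = c := by
      simp [cntV]
    have h2 : ∑ i ∈ Finset.Icc 1 c, cntV i (m + 1) (2 ^ (m + 1) - 1)
        = ∑ i ∈ Finset.Icc 1 c, cntL i (m + 1) := by
      refine Finset.sum_congr rfl fun i hi => ?_
      exact lemA (m + 1) (by omega) i (Finset.mem_Icc.mp hi).1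
    rw [h1, h2, hL]
    omega
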